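/- Exact instance of the gap-tooth consistency theorem with cubic coupling: let D > 0 and r, ℓ, c be real numbers, and let H : ℤ → ℝ be macroscale grid values such that H(k) = P(kD) for all k ∈ ℤ, where P : ℝ → ℝ is a polynomial of degree at most 3. Define the coupling values (C₊H)_j := (μH)_j + (r/2)(δH)_j + ((r² − 1)/8)(μδ²H)_j + ((r³ − r)/48)(δ³H)_j and (C₋H)_j the same with r replaced by −r, where (μH)_j := (H(j+1) + H(j−1))/2 and (δH)_j := H(j+1) − H(j−1). If real numbers U_j and U_j' satisfy the coupled macroscale relation U_j' = ℓ[(C₊H)_j − (C₋H)_j] + c·U_j, then U_j' = ℓ[P(jD + rD) − P(jD − rD)] + c·U_j. That is, the macroscale evolution produced by the gap-tooth closure coincides exactly with the underlying microscale equation ∂ₜū = ℓ·(h(x+rD) − h(x−rD)) + c·ū evaluated at the patch centre X_j = jD. -/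

import Mathlib

/-- Macroscale staggered mean operator acting on grid values:
`(μH)_j = (H(j+1) + H(j−1))/2`. -/
noncomputable def muZ (H : ℤ → ℝ) : ℤ → ℝ := fun j => (H (j + 1) + H (j - 1)) / 2

/-- Macroscale staggered difference operator acting on grid values:
`(δH)_j = H(j+1) − H(j−1)`. -/
noncomputable def deZ (H : ℤ → ℝ) : ℤ → ℝ := fun j => H (j + 1) - H (j - 1)

/-- The cubic coupling operator on macroscale grid values:
`C_r = μ + (r/2)δ + ((r²−1)/8)μδ² + ((r³−r)/48)δ³`; `C₊ = C_r` and `C₋ = C_{−r}`. -/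
noncomputable def CZ (r : ℝ) (H : ℤ → ℝ) : ℤ → ℝ := fun j =>
  muZ H j + (r / 2) * deZ H j + ((r ^ 2 - 1) / 8) * muZ (deZ (deZ H)) j
    + ((r ^ 3 - r) / 48) * deZ (deZ (deZ H)) j

/-!
`C_r` is the central-difference (Stirling) interpolation formula through the four staggered
nodes `j ± 1`, `j ± 3`, evaluated at `j + r`; an interpolant through four nodes reproduces
every cubic, so `C_r` applied to the samples of a cubic `Q` returns `Q (j + r)`. The grid samples
`P (kD)` are those of the cubic `k ↦ P (kD)`, which takes the value `P (jD ± rD)` at `j ± r`.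
-/

open Polynomial

lemma Polynomial.eval_eq_cubic_of_natDegree_le_three {R : Type*} [CommSemiring R] {P : R[X]}
    (hP : P.natDegree ≤ 3) (x : R) :
    P.eval x = P.coeff 0 + P.coeff 1 * x + P.coeff 2 * x ^ 2 + P.coeff 3 * x ^ 3 := by
  rw [eval_eq_sum_range' (Nat.lt_succ_of_le hP)]
  simp [Finset.sum_range_succ]

lemma CZ_eval_eq_eval_add {Q : ℝ[X]} (hQ : Q.natDegree ≤ 3) (r : ℝ) (j : ℤ) :
    CZ r (fun k => Q.eval (k : ℝ)) j = Q.eval ((j : ℝ) + r) := by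
  simp only [CZ, muZ, deZ, eval_eq_cubic_of_natDegree_le_three hQ]
  push_cast
  ring

lemma CZ_eval_mul_eq_eval_add_mul {P : ℝ[X]} (hP : P.natDegree ≤ 3) (D r : ℝ) (j : ℤ) :
    CZ r (fun k => P.eval ((k : ℝ) * D)) j = P.eval ((j : ℝ) * D + r * D) := by
  have hQ : (P.comp (X * C D)).natDegree ≤ 3 :=
    natDegree_comp_le.trans <|
      (Nat.mul_le_mul hP ((natDegree_mul_C_le X D).trans natDegree_X_le)).trans_eq (mul_one 3)
  simpa only [eval_comp, eval_mul, eval_X, eval_C, add_mul] using CZ_eval_eq_eval_add hQ r j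

theorem gap_tooth_cubic_consistency_exact_general (D : ℝ) (r ℓ c : ℝ)
    (H : ℤ → ℝ) (P : Polynomial ℝ) (hP : P.natDegree ≤ 3)
    (hH : ∀ k : ℤ, H k = P.eval ((k : ℝ) * D))
    (j : ℤ) (U U' : ℝ)
    (hU : U' = ℓ * (CZ r H j - CZ (-r) H j) + c * U) :
    U' = ℓ * (P.eval ((j : ℝ) * D + r * D) - P.eval ((j : ℝ) * D - r * D)) + c * U := by
  obtain rfl : H = fun k : ℤ => P.eval ((k : ℝ) * D) := funext hH
  rw [hU, CZ_eval_mul_eq_eval_add_mul hP, CZ_eval_mul_eq_eval_add_mul hP, neg_mul, ← sub_eq_add_neg]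

/-- Exact instance of the gap-tooth consistency theorem with cubic coupling:
if the macroscale grid values sample a cubic polynomial, `H k = P(kD)`, then the
macroscale evolution `U' = ℓ[(C₊H)_j − (C₋H)_j] + c·U` produced by the gap-tooth
closure coincides exactly with the microscale equation
`∂ₜū = ℓ·(h(X_j + rD) − h(X_j − rD)) + c·ū` at the patch centre `X_j = jD`. -/
theorem gap_tooth_cubic_consistency_exact (D : ℝ) (hD : 0 < D) (r ℓ c : ℝ)
    (H : ℤ → ℝ) (P : Polynomial ℝ) (hP : P.natDegree ≤ 3)
    (hH : ∀ k : ℤ, H k = P.eval ((k : ℝ) * D))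
    (j : ℤ) (U U' : ℝ)
    (hU : U' = ℓ * (CZ r H j - CZ (-r) H j) + c * U) :
    U' = ℓ * (P.eval ((j : ℝ) * D + r * D) - P.eval ((j : ℝ) * D - r * D)) + c * U :=
  gap_tooth_cubic_consistency_exact_general D r ℓ c H P hP hH j U U' hU
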